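/- arXiv:1309.0247 — 3 statements merged into one kernel-verified Lean document; each statement's English description precedes it below -/
import Mathlib

section
/- Let φ(x) = Σ_{k∈ℤ²\{0}} φ̂_k e^{2πi k·x/L} be a mean-zero L-periodic function on [0,L]² with square-summable coefficients satisfying Σ |k|⁴|φ̂_k|² < ∞. Then for every N ≥ 3, the L∞ norm of φ is bounded by (8 + 2π log N)^{1/2}/(2π) times |∇φ| plus (√π κ₀ N)^{-1} times |Δφ|, where κ₀ = 2π/L, |∇φ|² = (2π/L)² Σ |k|²|φ̂_k|² · L², and |Δφ|² denotes the L² norm of the Laplacian. -/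
/-!
Since `|e^{iθ}| = 1`, it suffices to bound `∑ |φ̂_k|`. Split the lattice at the square
`max(|k₁|, |k₂|) ≤ n`, `n = ⌊N⌋`, and apply Cauchy–Schwarz on both parts, with weight `|k|²` inside
and `|k|⁴` outside. The two lattice sums are estimated over the hollow squares
`max(|k₁|, |k₂|) = m`: on the `m`-th one, `∑ |k|⁻² ≤ 2/m² + 2π/m` (each side is compared with
`∫ dt / (m² + t²)` through `arctan`) and `∑ |k|⁻⁴ ≤ 8m / m⁴`. Summing over `m`, with the first
square contributing exactly `6`, gives `8 + 2π log n` inside and `4/n² ≤ 4π/N²` outside.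
-/

open Real Finset

lemma div_one_add_sq_le_arctan_sub {a b : ℝ} (ha : 0 ≤ a) (hab : a < b) :
    (b - a) / (1 + b ^ 2) ≤ arctan b - arctan a := by
  obtain ⟨c, hc, hslope⟩ := exists_hasDerivAt_eq_slope arctan (fun x => 1 / (1 + x ^ 2)) hab
    continuous_arctan.continuousOn fun x _ => hasDerivAt_arctan x
  have hc2 : c ^ 2 ≤ b ^ 2 := pow_le_pow_left₀ (ha.trans hc.1.le) hc.2.le 2
  have hba : 0 < b - a := sub_pos.mpr hab
  rw [eq_div_iff hba.ne'] at hslope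
  rw [← hslope, div_eq_mul_one_div, mul_comm]
  gcongr

lemma sum_range_inv_sq_add_sq_le (m : ℕ) (hm : 0 < m) :
    ∑ i ∈ range m, ((m : ℝ) ^ 2 + ((i : ℝ) + 1) ^ 2)⁻¹ ≤ π / (4 * m) := by
  have hm' : (0 : ℝ) < m := Nat.cast_pos.mpr hm
  have hterm : ∀ i ∈ range m, ((m : ℝ) ^ 2 + ((i : ℝ) + 1) ^ 2)⁻¹ ≤
      arctan (((i + 1 : ℕ) : ℝ) / m) / m - arctan ((i : ℝ) / m) / m := by
    intro i _
    have h := div_one_add_sq_le_arctan_sub (a := (i : ℝ) / m) (b := ((i : ℝ) + 1) / m)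
      (by positivity) (by gcongr; linarith)
    rw [← sub_div, le_div_iff₀ hm']
    push_cast
    refine le_of_eq_of_le ?_ h
    field_simp
    ring
  calc ∑ i ∈ range m, ((m : ℝ) ^ 2 + ((i : ℝ) + 1) ^ 2)⁻¹
      ≤ ∑ i ∈ range m, (arctan (((i + 1 : ℕ) : ℝ) / m) / m - arctan ((i : ℝ) / m) / m) :=
        sum_le_sum hterm
    _ = π / (4 * m) := by
        rw [sum_range_sub (fun i : ℕ => arctan ((i : ℝ) / m) / m)]
        simp [div_self hm'.ne', arctan_one, div_div]

lemma sum_Icc_inv_sq_add_sq_le (m : ℕ) (hm : 0 < m) :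
    ∑ j ∈ Icc (-(m : ℤ)) m, ((m : ℝ) ^ 2 + (j : ℝ) ^ 2)⁻¹ ≤ ((m : ℝ) ^ 2)⁻¹ + π / (2 * m) := by
  have heven : Function.Even fun j : ℤ => ((m : ℝ) ^ 2 + (j : ℝ) ^ 2)⁻¹ := fun j => by
    simp
  rw [sum_Icc_of_even_eq_range heven, sum_range_succ']
  have := sum_range_inv_sq_add_sq_le m hm
  push_cast
  simp only [nsmul_eq_mul, Nat.cast_ofNat, zero_pow two_ne_zero, add_zero]
  have : π / (2 * m) = 2 * (π / (4 * m)) := by ring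
  linarith

def latticeNormSq (k : ℤ × ℤ) : ℝ := (k.1 : ℝ) ^ 2 + (k.2 : ℝ) ^ 2

lemma latticeNormSq_nonneg (k : ℤ × ℤ) : 0 ≤ latticeNormSq k := by
  unfold latticeNormSq; positivity

lemma sq_le_latticeNormSq_of_mem_box {k : ℤ × ℤ} {m : ℕ} (hk : k ∈ box m) :
    (m : ℝ) ^ 2 ≤ latticeNormSq k := by
  rw [Int.mem_box] at hk
  have h : (m : ℤ) ^ 2 ≤ k.1 ^ 2 + k.2 ^ 2 := by
    rcases max_choice k.1.natAbs k.2.natAbs with h | h <;>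
      rw [← hk, h, Int.natAbs_sq] <;> nlinarith
  unfold latticeNormSq
  exact_mod_cast h

lemma one_le_latticeNormSq {k : ℤ × ℤ} (hk : k ≠ 0) : 1 ≤ latticeNormSq k := by
  have hm : 1 ≤ max k.1.natAbs k.2.natAbs := by
    simp only [Ne, Prod.ext_iff, Prod.fst_zero, Prod.snd_zero] at hk
    omega
  calc (1 : ℝ) ≤ (max k.1.natAbs k.2.natAbs : ℕ) ^ 2 := by exact_mod_cast Nat.one_le_pow _ _ hm
    _ ≤ latticeNormSq k := sq_le_latticeNormSq_of_mem_box (Int.mem_box.mpr rfl)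

lemma sum_box_inv_latticeNormSq (m : ℕ) (hm : 0 < m) :
    ∑ k ∈ box m, (latticeNormSq k)⁻¹ =
      4 * ∑ j ∈ Icc (-(m : ℤ)) m, ((m : ℝ) ^ 2 + (j : ℝ) ^ 2)⁻¹ - 2 / (m : ℝ) ^ 2 := by
  set P : Finset ℤ := {(m : ℤ), -(m : ℤ)}
  have hP : (m : ℤ) ≠ -(m : ℤ) := by omega
  have hbox : box m = P ×ˢ Icc (-(m : ℤ)) m ∪ Icc (-(m : ℤ)) m ×ˢ P := by
    ext k
    simp only [Int.mem_box, P, mem_union, mem_product, mem_insert, mem_singleton, mem_Icc]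
    omega
  have hcorners : P ×ˢ Icc (-(m : ℤ)) m ∩ Icc (-(m : ℤ)) m ×ˢ P = P ×ˢ P := by
    ext k
    simp only [P, mem_inter, mem_product, mem_insert, mem_singleton, mem_Icc]
    omega
  have hunion := sum_union_inter (s₁ := P ×ˢ Icc (-(m : ℤ)) m) (s₂ := Icc (-(m : ℤ)) m ×ˢ P)
    (f := fun k => (latticeNormSq k)⁻¹)
  rw [← hbox, hcorners, sum_product, sum_product_right, sum_product] at hunion
  simp only [P, sum_pair hP, latticeNormSq, Int.cast_neg, Int.cast_natCast, neg_sq] at hunion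
  have hswap : ∀ x : ℤ, ((x : ℝ) ^ 2 + (m : ℝ) ^ 2)⁻¹ = ((m : ℝ) ^ 2 + (x : ℝ) ^ 2)⁻¹ :=
    fun x => by rw [add_comm]
  simp only [hswap, ← two_mul, ← mul_sum] at hunion
  unfold latticeNormSq
  linear_combination hunion

lemma sum_box_one_inv_latticeNormSq : ∑ k ∈ box 1, (latticeNormSq k)⁻¹ = 6 := by
  rw [sum_box_inv_latticeNormSq 1 one_pos, show Icc (-((1 : ℕ) : ℤ)) (1 : ℕ) = {-1, 0, 1} by rfl]
  norm_num

lemma sum_box_inv_latticeNormSq_le (m : ℕ) (hm : 0 < m) :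
    ∑ k ∈ box m, (latticeNormSq k)⁻¹ ≤ 2 / (m : ℝ) ^ 2 + 2 * π / m := by
  have := sum_Icc_inv_sq_add_sq_le m hm
  rw [sum_box_inv_latticeNormSq m hm]
  have h1 : 4 * ((m : ℝ) ^ 2)⁻¹ - 2 / (m : ℝ) ^ 2 = 2 / (m : ℝ) ^ 2 := by ring
  have h2 : 4 * (π / (2 * m)) = 2 * π / m := by ring
  linarith

lemma sum_Icc_sum_box_inv_latticeNormSq_le (n : ℕ) (hn : 0 < n) :
    ∑ m ∈ Icc 1 n, ∑ k ∈ box m, (latticeNormSq k)⁻¹ ≤ 8 - 2 / n + 2 * π * log n := by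
  induction n, hn using Nat.le_induction with
  | base => norm_num [sum_box_one_inv_latticeNormSq]
  | succ n hn ih =>
    have hn' : (0 : ℝ) < n := by exact_mod_cast hn
    rw [sum_Icc_succ_top (by omega)]
    have hshell := sum_box_inv_latticeNormSq_le (n + 1) n.succ_pos
    push_cast at hshell ⊢
    -- `1 / (n + 1) ≤ log (n + 1) - log n` is `1 - x⁻¹ ≤ log x` at `x = (n + 1) / n`.
    have hlog : 1 / ((n : ℝ) + 1) ≤ log ((n : ℝ) + 1) - log n := by
      have := one_sub_inv_le_log_of_pos (x := ((n : ℝ) + 1) / n) (by positivity)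
      rw [log_div (by positivity) hn'.ne', inv_div] at this
      convert this using 1
      field_simp
      ring
    have hsq : 2 / ((n : ℝ) + 1) ^ 2 ≤ 2 / n - 2 / ((n : ℝ) + 1) := by
      rw [div_sub_div _ _ hn'.ne' (by positivity), div_le_div_iff₀ (by positivity) (by positivity)]
      nlinarith
    have hpi := mul_le_mul_of_nonneg_left hlog two_pi_pos.le
    rw [mul_one_div] at hpi
    linarith

lemma sum_box_inv_latticeNormSq_sq_le (m : ℕ) (hm : 0 < m) :
    ∑ k ∈ box m, (latticeNormSq k ^ 2)⁻¹ ≤ 8 / (m : ℝ) ^ 3 := by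
  have hm' : (0 : ℝ) < m := by exact_mod_cast hm
  have hterm : ∀ k ∈ box m, (latticeNormSq k ^ 2)⁻¹ ≤ ((m : ℝ) ^ 4)⁻¹ := fun k hk => by
    have := sq_le_latticeNormSq_of_mem_box hk
    rw [show (m : ℝ) ^ 4 = ((m : ℝ) ^ 2) ^ 2 by ring]
    gcongr
  calc ∑ k ∈ box m, (latticeNormSq k ^ 2)⁻¹ ≤ #(box m : Finset (ℤ × ℤ)) • ((m : ℝ) ^ 4)⁻¹ :=
        sum_le_card_nsmul _ _ _ hterm
    _ = 8 / (m : ℝ) ^ 3 := by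
        rw [Int.card_box hm.ne', nsmul_eq_mul]
        field_simp
        push_cast
        ring

lemma sum_Ioc_sum_box_inv_latticeNormSq_sq_le {n M : ℕ} (hn : 0 < n) (hnM : n ≤ M) :
    ∑ m ∈ Ioc n M, ∑ k ∈ box m, (latticeNormSq k ^ 2)⁻¹ ≤ 4 / (n : ℝ) ^ 2 - 4 / (M : ℝ) ^ 2 := by
  induction M, hnM using Nat.le_induction with
  | base => simp
  | succ M hM ih =>
    have hM' : (0 : ℝ) < M := by exact_mod_cast hn.trans_le hM
    rw [sum_Ioc_succ_top hM]
    have hshell := sum_box_inv_latticeNormSq_sq_le (M + 1) M.succ_pos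
    have htel : 8 / ((M : ℝ) + 1) ^ 3 ≤ 4 / (M : ℝ) ^ 2 - 4 / ((M : ℝ) + 1) ^ 2 := by
      rw [div_sub_div _ _ (by positivity) (by positivity),
        div_le_div_iff₀ (by positivity) (by positivity)]
      nlinarith [pow_pos hM' 3, pow_pos hM' 4]
    push_cast at hshell ⊢
    linarith

lemma sum_le_sum_sum_box {f : ℤ × ℤ → ℝ} (hf : ∀ k, 0 ≤ f k) {s : Finset (ℤ × ℤ)}
    {t : Finset ℕ} (hst : ∀ k ∈ s, max k.1.natAbs k.2.natAbs ∈ t) :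
    ∑ k ∈ s, f k ≤ ∑ m ∈ t, ∑ k ∈ box m, f k := by
  rw [← sum_fiberwise_of_maps_to hst]
  refine sum_le_sum fun m _ => sum_le_sum_of_subset_of_nonneg ?_ fun k _ _ => hf k
  intro k hk
  exact Int.mem_box.mpr (mem_filter.mp hk).2

lemma sum_inv_latticeNormSq_le {n : ℕ} (hn : 0 < n) {s : Finset (ℤ × ℤ)}
    (hs : ∀ k ∈ s, max k.1.natAbs k.2.natAbs ∈ Icc 1 n) :
    ∑ k ∈ s, (latticeNormSq k)⁻¹ ≤ 8 + 2 * π * log n := by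
  have hn' : (0 : ℝ) < n := by exact_mod_cast hn
  calc ∑ k ∈ s, (latticeNormSq k)⁻¹
      ≤ ∑ m ∈ Icc 1 n, ∑ k ∈ box m, (latticeNormSq k)⁻¹ :=
        sum_le_sum_sum_box (fun k => inv_nonneg.mpr (latticeNormSq_nonneg k)) hs
    _ ≤ 8 - 2 / n + 2 * π * log n := sum_Icc_sum_box_inv_latticeNormSq_le n hn
    _ ≤ 8 + 2 * π * log n := by linarith [div_pos two_pos hn']

lemma sum_inv_latticeNormSq_sq_le {n : ℕ} (hn : 0 < n) {s : Finset (ℤ × ℤ)}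
    (hs : ∀ k ∈ s, n < max k.1.natAbs k.2.natAbs) :
    ∑ k ∈ s, (latticeNormSq k ^ 2)⁻¹ ≤ 4 / (n : ℝ) ^ 2 := by
  set M := n + s.sup fun k => max k.1.natAbs k.2.natAbs
  have hsM : ∀ k ∈ s, max k.1.natAbs k.2.natAbs ∈ Ioc n M := fun k hk =>
    mem_Ioc.mpr ⟨hs k hk, (le_sup (f := fun k : ℤ × ℤ => max k.1.natAbs k.2.natAbs) hk).trans
      (Nat.le_add_left _ _)⟩
  calc ∑ k ∈ s, (latticeNormSq k ^ 2)⁻¹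
      ≤ ∑ m ∈ Ioc n M, ∑ k ∈ box m, (latticeNormSq k ^ 2)⁻¹ :=
        sum_le_sum_sum_box (fun k => by positivity) hsM
    _ ≤ 4 / (n : ℝ) ^ 2 - 4 / (M : ℝ) ^ 2 :=
        sum_Ioc_sum_box_inv_latticeNormSq_sq_le hn (Nat.le_add_right _ _)
    _ ≤ 4 / (n : ℝ) ^ 2 := sub_le_self _ (by positivity)

lemma sum_le_sqrt_sum_inv_mul_sqrt_sum {ι : Type*} (s : Finset ι) {a w : ι → ℝ}
    (ha : ∀ i, 0 ≤ a i) (hw : ∀ i, 0 ≤ w i) (hs : ∀ i ∈ s, w i ≠ 0) :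
    ∑ i ∈ s, a i ≤ √(∑ i ∈ s, (w i)⁻¹) * √(∑ i ∈ s, w i * a i ^ 2) := by
  have hsplit : ∀ i ∈ s, a i = √((w i)⁻¹) * √(w i * a i ^ 2) := fun i hi => by
    rw [← sqrt_mul (inv_nonneg.mpr (hw i)), inv_mul_cancel_left₀ (hs i hi), sqrt_sq (ha i)]
  rw [sum_congr rfl hsplit]
  exact sum_sqrt_mul_sqrt_le s (fun i => inv_nonneg.mpr (hw i))
    fun i => mul_nonneg (hw i) (sq_nonneg _)

lemma summable_latticeNormSq_mul_sq {a : ℤ × ℤ → ℝ} (ha0 : a 0 = 0)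
    (h : Summable fun k => latticeNormSq k ^ 2 * a k ^ 2) :
    Summable fun k => latticeNormSq k * a k ^ 2 := by
  refine h.of_nonneg_of_le (fun k => mul_nonneg (latticeNormSq_nonneg k) (sq_nonneg _))
    fun k => ?_
  rcases eq_or_ne k 0 with rfl | hk
  · simp [ha0]
  · have := one_le_latticeNormSq hk
    gcongr
    nlinarith

lemma sum_le_brezisGallouet {a : ℤ × ℤ → ℝ} (ha : ∀ k, 0 ≤ a k) (ha0 : a 0 = 0)
    (h : Summable fun k => latticeNormSq k ^ 2 * a k ^ 2) {n : ℕ} (hn : 0 < n)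
    (s : Finset (ℤ × ℤ)) :
    ∑ k ∈ s, a k ≤ √(8 + 2 * π * log n) * √(∑' k, latticeNormSq k * a k ^ 2) +
      2 / n * √(∑' k, latticeNormSq k ^ 2 * a k ^ 2) := by
  set s₀ := s.filter (· ≠ 0)
  have hs₀ : ∀ k ∈ s₀, latticeNormSq k ≠ 0 := fun k hk =>
    (zero_lt_one.trans_le (one_le_latticeNormSq (mem_filter.mp hk).2)).ne'
  rw [← sum_filter_of_ne (p := (· ≠ 0)) fun k _ hk h => hk (h ▸ ha0),
    ← sum_filter_add_sum_filter_not s₀ fun k => max k.1.natAbs k.2.natAbs ≤ n]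
  gcongr ?_ + ?_
  · calc _ ≤ √(∑ k ∈ s₀ with max k.1.natAbs k.2.natAbs ≤ n, (latticeNormSq k)⁻¹) *
            √(∑ k ∈ s₀ with max k.1.natAbs k.2.natAbs ≤ n, latticeNormSq k * a k ^ 2) :=
          sum_le_sqrt_sum_inv_mul_sqrt_sum _ ha latticeNormSq_nonneg
            fun k hk => hs₀ k (mem_filter.mp hk).1
      _ ≤ _ := by
          gcongr
          · refine sum_inv_latticeNormSq_le hn fun k hk => ?_
            simp only [s₀, mem_filter, Ne, Prod.ext_iff, Prod.fst_zero, Prod.snd_zero] at hk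
            exact mem_Icc.mpr ⟨by omega, hk.2⟩
          · exact (summable_latticeNormSq_mul_sq ha0 h).sum_le_tsum _ fun k _ => mul_nonneg (latticeNormSq_nonneg k) (sq_nonneg _)
  · have hsqrt : √(4 / (n : ℝ) ^ 2) = 2 / n := by
      rw [show (4 : ℝ) / n ^ 2 = (2 / n) ^ 2 by ring, sqrt_sq (by positivity)]
    calc _ ≤ √(∑ k ∈ s₀ with ¬max k.1.natAbs k.2.natAbs ≤ n, (latticeNormSq k ^ 2)⁻¹) *
            √(∑ k ∈ s₀ with ¬max k.1.natAbs k.2.natAbs ≤ n, latticeNormSq k ^ 2 * a k ^ 2) :=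
          sum_le_sqrt_sum_inv_mul_sqrt_sum _ ha (fun k => sq_nonneg _)
            fun k hk => pow_ne_zero 2 (hs₀ k (mem_filter.mp hk).1)
      _ ≤ _ := by
          rw [← hsqrt]
          gcongr
          · exact sum_inv_latticeNormSq_sq_le hn fun k hk => not_le.mp (mem_filter.mp hk).2
          · exact h.sum_le_tsum _ fun k _ => mul_nonneg (sq_nonneg _) (sq_nonneg _)

lemma exists_nat_le_le_sqrt_pi_mul {N : ℝ} (hN : 3 ≤ N) :
    ∃ n : ℕ, 0 < n ∧ (n : ℝ) ≤ N ∧ N ≤ √π * n := by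
  have hn : 3 ≤ ⌊N⌋₊ := Nat.le_floor (by exact_mod_cast hN)
  have hn' : (3 : ℝ) ≤ ⌊N⌋₊ := by exact_mod_cast hn
  have hpi : 4 / 3 ≤ √π := le_sqrt_of_sq_le (by nlinarith [pi_gt_three])
  refine ⟨⌊N⌋₊, by omega, Nat.floor_le (by linarith), ?_⟩
  nlinarith [Nat.lt_floor_add_one N]

lemma norm_mul_exp_two_pi_I_mul_ofReal (c : ℂ) (t : ℝ) :
    ‖c * Complex.exp (2 * π * Complex.I * t)‖ = ‖c‖ := by
  rw [norm_mul, show 2 * π * Complex.I * t = ((2 * π * t : ℝ) : ℂ) * Complex.I by push_cast; ring,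
    Complex.norm_exp_ofReal_mul_I, mul_one]

lemma sqrt_div_mul_sqrt_add_inv_mul_sqrt_eq {L N : ℝ} (hL : 0 < L) (hN : 0 < N) (E S₁ S₂ : ℝ) :
    √E / (2 * π) * √((2 * π / L) ^ 2 * L ^ 2 * S₁) +
        1 / (√π * (2 * π / L) * N) * √((2 * π / L) ^ 4 * L ^ 2 * S₂) =
      √E * √S₁ + 2 * √π / N * √S₂ := by
  rw [show (2 * π / L) ^ 2 * L ^ 2 * S₁ = (2 * π) ^ 2 * S₁ by field_simp,
    show (2 * π / L) ^ 4 * L ^ 2 * S₂ = ((2 * π) ^ 2 / L) ^ 2 * S₂ by field_simp,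
    sqrt_mul (by positivity), sqrt_mul (by positivity), sqrt_sq (by positivity),
    sqrt_sq (by positivity)]
  field_simp
  linear_combination -2 * √S₂ * mul_self_sqrt pi_pos.le

theorem stmt_6_general (L : ℝ) (hL : 0 < L) (φhat : ℤ × ℤ → ℂ) (h0 : φhat 0 = 0)
    (hsum : Summable fun k : ℤ × ℤ => (((k.1 : ℝ) ^ 2 + (k.2 : ℝ) ^ 2)) ^ 2 * ‖φhat k‖ ^ 2)
    (N : ℝ) (hN : 3 ≤ N) (x : ℝ × ℝ) :
    ‖∑' k : ℤ × ℤ,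
        φhat k * Complex.exp (2 * π * Complex.I *
          (((k.1 : ℝ) * x.1 + (k.2 : ℝ) * x.2) / L))‖ ≤
      (Real.sqrt (8 + 2 * π * Real.log N) / (2 * π)) *
        Real.sqrt ((2 * π / L) ^ 2 * L ^ 2 *
          ∑' k : ℤ × ℤ, ((k.1 : ℝ) ^ 2 + (k.2 : ℝ) ^ 2) * ‖φhat k‖ ^ 2) +
      (1 / (Real.sqrt π * (2 * π / L) * N)) *
        Real.sqrt ((2 * π / L) ^ 4 * L ^ 2 *
          ∑' k : ℤ × ℤ, ((k.1 : ℝ) ^ 2 + (k.2 : ℝ) ^ 2) ^ 2 * ‖φhat k‖ ^ 2) := by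
  set S₁ := ∑' k : ℤ × ℤ, ((k.1 : ℝ) ^ 2 + (k.2 : ℝ) ^ 2) * ‖φhat k‖ ^ 2
  set S₂ := ∑' k : ℤ × ℤ, ((k.1 : ℝ) ^ 2 + (k.2 : ℝ) ^ 2) ^ 2 * ‖φhat k‖ ^ 2
  have ha0 : ‖φhat 0‖ = 0 := by rw [h0, norm_zero]
  obtain ⟨n, hn, hnN, hNn⟩ := exists_nat_le_le_sqrt_pi_mul hN
  have hbound := sum_le_brezisGallouet (fun k => norm_nonneg (φhat k)) ha0 hsum hn
  have hterm : ∀ k : ℤ × ℤ, ‖φhat k * Complex.exp (2 * π * Complex.I *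
      (((k.1 : ℝ) * x.1 + (k.2 : ℝ) * x.2) / L))‖ = ‖φhat k‖ := fun k => by
    rw [← norm_mul_exp_two_pi_I_mul_ofReal (φhat k) ((k.1 * x.1 + k.2 * x.2) / L)]
    push_cast
    rfl
  have hn' : (0 : ℝ) < n := by exact_mod_cast hn
  calc _ ≤ ∑' k : ℤ × ℤ, ‖φhat k‖ := by
        simpa only [hterm] using norm_tsum_le_tsum_norm
          ((summable_of_sum_le (fun k => norm_nonneg _) hbound).congr fun k => (hterm k).symm)
    _ ≤ √(8 + 2 * π * log n) * √S₁ + 2 / n * √S₂ :=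
        tsum_le_of_sum_le (fun k => norm_nonneg _) hbound
    _ ≤ √(8 + 2 * π * log N) * √S₁ + 2 * √π / N * √S₂ := by
        gcongr ?_ * _ + ?_ * _
        · gcongr
        · rw [div_le_div_iff₀ hn' (by linarith)]
          linarith
    _ = _ := (sqrt_div_mul_sqrt_add_inv_mul_sqrt_eq hL (by linarith) _ _ _).symm

/-- Brézis–Gallouet type interpolation inequality for a mean-zero `L`-periodic
function given by its Fourier series `φ(x) = Σ_k φ̂_k e^{2πi k·x/L}`. -/
theorem stmt_6 (L : ℝ) (hL : 0 < L) (φhat : ℤ × ℤ → ℂ) (h0 : φhat 0 = 0)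
    (hsum : Summable fun k : ℤ × ℤ => (((k.1 : ℝ) ^ 2 + (k.2 : ℝ) ^ 2)) ^ 2 * ‖φhat k‖ ^ 2)
    (hsq : Summable fun k : ℤ × ℤ => ‖φhat k‖ ^ 2)
    (N : ℝ) (hN : 3 ≤ N) (x : ℝ × ℝ) :
    ‖∑' k : ℤ × ℤ,
        φhat k * Complex.exp (2 * π * Complex.I *
          (((k.1 : ℝ) * x.1 + (k.2 : ℝ) * x.2) / L))‖ ≤
      (Real.sqrt (8 + 2 * π * Real.log N) / (2 * π)) *
        Real.sqrt ((2 * π / L) ^ 2 * L ^ 2 *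
          ∑' k : ℤ × ℤ, ((k.1 : ℝ) ^ 2 + (k.2 : ℝ) ^ 2) * ‖φhat k‖ ^ 2) +
      (1 / (Real.sqrt π * (2 * π / L) * N)) *
        Real.sqrt ((2 * π / L) ^ 4 * L ^ 2 *
          ∑' k : ℤ × ℤ, ((k.1 : ℝ) ^ 2 + (k.2 : ℝ) ^ 2) ^ 2 * ‖φhat k‖ ^ 2) :=
  stmt_6_general L hL φhat h0 hsum N hN x
end

section
/- Let α, β be locally integrable real-valued functions on (0,∞) such that for some T > 0: liminf_{t→∞} (1/T)∫_t^{t+T} α = γ > 0, limsup_{t→∞} (1/T)∫_t^{t+T} α⁻ < ∞, and lim_{t→∞} (1/T)∫_t^{t+T} β⁺ = 0, where α⁻ = max{-α,0} and β⁺ = max{β,0}. If ξ is an absolutely continuous nonnegative function on (0,∞) satisfying ξ' + αξ ≤ β almost everywhere, then ξ(t) → 0 as t → ∞. -/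
open MeasureTheory Filter Set Topology

/-!
Multiplying by the integrating factor `exp (∫ α)`, which is legitimate because products and
`exp ∘` of absolutely continuous functions are absolutely continuous, gives on every window
`[t, s]` the bound `ξ s ≤ exp (-∫ₜˢ α) ξ t + exp (∫ₜˢ α⁻) ∫ₜˢ β⁺`.
For large `t` the liminf hypothesis makes `exp (-∫ₜᵗ⁺ᵀ α) ≤ q := exp (-γT) < 1`, the limsup
hypothesis bounds `exp (∫ α⁻)` over a window by a constant `K`, and `∫ₜᵗ⁺ᵀ β⁺ → 0`. Hence
`xₙ = ξ (t₀ + nT)` satisfies `xₙ₊₁ ≤ q xₙ + o(1)`, so `xₙ → 0`, and the window bound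
`ξ s ≤ K (ξ t + ∫ₜᵗ⁺ᵀ β⁺)` for `s ∈ [t, t + T]` passes this on to `ξ`.
-/
theorem LipschitzOnWith.comp_absolutelyContinuousOnInterval {X Y : Type*}
    [PseudoMetricSpace X] [PseudoMetricSpace Y] {f : ℝ → X} {g : X → Y} {s : Set X}
    {K : NNReal} {a b : ℝ} (hg : LipschitzOnWith K g s)
    (hf : AbsolutelyContinuousOnInterval f a b) (hfs : MapsTo f (uIcc a b) s) :
    AbsolutelyContinuousOnInterval (g ∘ f) a b := by
  have hK := Tendsto.const_mul (K : ℝ) (hf : Tendsto _ _ _)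
  rw [mul_zero] at hK
  refine squeeze_zero' (Eventually.of_forall fun _ => Finset.sum_nonneg fun _ _ => dist_nonneg)
    ?_ hK
  filter_upwards [eventually_inf_principal.2 (Eventually.of_forall fun _ h => h)]
    with E (hE : E ∈ AbsolutelyContinuousOnInterval.disjWithin a b)
  rw [Finset.mul_sum]
  exact Finset.sum_le_sum fun i hi =>
    hg.dist_le_mul _ (hfs (hE.1 i hi).1) _ (hfs (hE.1 i hi).2)

theorem LocallyLipschitz.comp_absolutelyContinuousOnInterval {Y : Type*}
    [PseudoMetricSpace Y] {f : ℝ → ℝ} {g : ℝ → Y} {a b : ℝ} (hg : LocallyLipschitz g)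
    (hf : AbsolutelyContinuousOnInterval f a b) :
    AbsolutelyContinuousOnInterval (g ∘ f) a b := by
  have hcpt : IsCompact (f '' uIcc a b) := isCompact_uIcc.image_of_continuousOn hf.continuousOn
  obtain ⟨K, hK⟩ := hg.locallyLipschitzOn.exists_lipschitzOnWith_of_compact hcpt
  exact hK.comp_absolutelyContinuousOnInterval hf (mapsTo_image f _)

theorem AbsolutelyContinuousOnInterval.mul_exp_sub_le_integral {ξ A β : ℝ → ℝ} {a b : ℝ}
    (hab : a ≤ b) (hξ : AbsolutelyContinuousOnInterval ξ a b)
    (hA : AbsolutelyContinuousOnInterval A a b) (hβ : IntervalIntegrable β volume a b)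
    (h : ∀ᵐ x, x ∈ Icc a b → deriv ξ x + deriv A x * ξ x ≤ β x) :
    ξ b * Real.exp (A b) - ξ a * Real.exp (A a) ≤ ∫ x in a..b, β x * Real.exp (A x) := by
  have hE : AbsolutelyContinuousOnInterval (Real.exp ∘ A) a b :=
    Real.contDiff_exp.locallyLipschitz.comp_absolutelyContinuousOnInterval hA
  rw [show ξ b * Real.exp (A b) - ξ a * Real.exp (A a) = _ from
    (hξ.integral_deriv_mul_eq_sub hE).symm]
  refine intervalIntegral.integral_mono_ae_restrict hab
    ((hξ.intervalIntegrable_deriv.mul_continuousOn hE.continuousOn).add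
      (hE.intervalIntegrable_deriv.continuousOn_mul hξ.continuousOn))
    (hβ.mul_continuousOn hE.continuousOn) ?_
  filter_upwards [(ae_restrict_iff' measurableSet_Icc).2 h,
    (ae_restrict_iff' measurableSet_Icc).2 (uIcc_of_le hab ▸ hA.ae_differentiableAt)]
    with x hineq hdiff
  have hE' : deriv (Real.exp ∘ A) x = Real.exp (A x) * deriv A x :=
    hdiff.hasDerivAt.exp.deriv
  rw [hE', Function.comp_apply]
  calc deriv ξ x * Real.exp (A x) + ξ x * (Real.exp (A x) * deriv A x)
      = (deriv ξ x + deriv A x * ξ x) * Real.exp (A x) := by ring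
    _ ≤ β x * Real.exp (A x) := by gcongr

theorem IntervalIntegrable.pos_part {f : ℝ → ℝ} {μ : Measure ℝ} {a b : ℝ}
    (hf : IntervalIntegrable f μ a b) : IntervalIntegrable (fun x => max (f x) 0) μ a b :=
  ⟨hf.1.pos_part, hf.2.pos_part⟩

theorem neg_integral_le_integral_negPart {f : ℝ → ℝ} {a b c d : ℝ} (hca : c ≤ a) (hab : a ≤ b)
    (hbd : b ≤ d) (hf : IntervalIntegrable f volume c d) :
    -∫ x in a..b, f x ≤ ∫ x in c..d, max (-f x) 0 := by
  have hf' : IntervalIntegrable f volume a b :=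
    hf.mono_set <| by
      rw [uIcc_of_le hab, uIcc_of_le (hca.trans (hab.trans hbd))]
      exact Icc_subset_Icc hca hbd
  calc -∫ x in a..b, f x = ∫ x in a..b, -f x := intervalIntegral.integral_neg.symm
    _ ≤ ∫ x in a..b, max (-f x) 0 :=
      intervalIntegral.integral_mono_on hab hf'.neg hf'.neg.pos_part fun _ _ => le_max_left _ _
    _ ≤ ∫ x in c..d, max (-f x) 0 :=
      intervalIntegral.integral_mono_interval hca hab hbd
        (Eventually.of_forall fun _ => le_max_right _ _) hf.neg.pos_part

theorem mul_exp_integral_le_of_ae_add_mul_le {ξ d α β : ℝ → ℝ} {a b : ℝ} (hab : a ≤ b)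
    (hξ : ∀ x ∈ Icc a b, ξ x = ξ a + ∫ t in a..x, d t)
    (hd : IntervalIntegrable d volume a b) (hα : IntervalIntegrable α volume a b)
    (hβ : IntervalIntegrable β volume a b)
    (h : ∀ᵐ x, x ∈ Icc a b → d x + α x * ξ x ≤ β x) :
    ξ b * Real.exp (∫ t in a..b, α t) ≤ ξ a + ∫ x in a..b, β x * Real.exp (∫ t in a..x, α t) := by
  set F : ℝ → ℝ := fun x => ξ a + ∫ t in a..x, d t
  set A : ℝ → ℝ := fun x => ∫ t in a..x, α t
  have hF : AbsolutelyContinuousOnInterval F a b :=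
    (LipschitzWith.const (ξ a)).lipschitzOnWith.absolutelyContinuousOnInterval.add
      (hd.absolutelyContinuousOnInterval_intervalIntegral left_mem_uIcc)
  have hA : AbsolutelyContinuousOnInterval A a b :=
    hα.absolutelyContinuousOnInterval_intervalIntegral left_mem_uIcc
  have hderiv : ∀ᵐ x, x ∈ Icc a b → deriv F x + deriv A x * F x ≤ β x := by
    filter_upwards [h, hd.ae_hasDerivAt_integral, hα.ae_hasDerivAt_integral]
      with x hx hFx hAx hmem
    have hmem' : x ∈ uIcc a b := uIcc_of_le hab ▸ hmem
    rw [((hFx hmem' a left_mem_uIcc).const_add (ξ a)).deriv, (hAx hmem' a left_mem_uIcc).deriv,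
      show F x = ξ x from (hξ x hmem).symm]
    exact hx hmem
  have key := hF.mul_exp_sub_le_integral hab hA hβ hderiv
  have hFb : F b = ξ b := (hξ b (right_mem_Icc.2 hab)).symm
  simp only [A, hFb, intervalIntegral.integral_same, Real.exp_zero, F, add_zero, mul_one] at key
  linarith

theorem le_exp_neg_integral_mul_add {ξ d α β : ℝ → ℝ} {a b : ℝ} (hab : a ≤ b)
    (hξ : ∀ x ∈ Icc a b, ξ x = ξ a + ∫ t in a..x, d t)
    (hd : IntervalIntegrable d volume a b) (hα : IntervalIntegrable α volume a b)
    (hβ : IntervalIntegrable β volume a b)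
    (h : ∀ᵐ x, x ∈ Icc a b → d x + α x * ξ x ≤ β x) :
    ξ b ≤ Real.exp (-∫ t in a..b, α t) * ξ a
      + Real.exp (∫ t in a..b, max (-α t) 0) * ∫ t in a..b, max (β t) 0 := by
  set A : ℝ → ℝ := fun x => ∫ t in a..x, α t
  set M := ∫ t in a..b, max (-α t) 0
  have key := mul_exp_integral_le_of_ae_add_mul_le hab hξ hd hα hβ.pos_part
    (h.mono fun x hx hmem => (hx hmem).trans (le_max_left _ _))
  have hA_le : ∀ x ∈ Icc a b, A x ≤ A b + M := fun x hx => by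
    have := neg_integral_le_integral_negPart hx.1 hx.2 le_rfl hα
    rw [← intervalIntegral.integral_interval_sub_left hα
      (hα.mono_set (uIcc_subset_uIcc_left (uIcc_of_le hab ▸ hx)))] at this
    linarith
  have hexpA : ContinuousOn (fun x => Real.exp (A x)) (uIcc a b) :=
    (hα.absolutelyContinuousOnInterval_intervalIntegral left_mem_uIcc).continuousOn.rexp
  have hβint : ∫ x in a..b, max (β x) 0 * Real.exp (A x)
      ≤ Real.exp (A b + M) * ∫ x in a..b, max (β x) 0 := by
    rw [← intervalIntegral.integral_const_mul]
    refine intervalIntegral.integral_mono_on hab (hβ.pos_part.mul_continuousOn hexpA)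
      (hβ.pos_part.const_mul _) fun x hx => ?_
    rw [mul_comm]
    gcongr
    exact hA_le x hx
  calc ξ b = Real.exp (-A b) * (ξ b * Real.exp (A b)) := by
        rw [Real.exp_neg]; field_simp
    _ ≤ Real.exp (-A b) * (ξ a + Real.exp (A b + M) * ∫ x in a..b, max (β x) 0) := by
        gcongr; linarith
    _ = Real.exp (-A b) * ξ a + Real.exp M * ∫ t in a..b, max (β t) 0 := by
        rw [Real.exp_add, Real.exp_neg]; field_simp

theorem tendsto_zero_of_le_mul_add {x δ : ℕ → ℝ} {q : ℝ} (hq0 : 0 ≤ q) (hq1 : q < 1)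
    (hx : ∀ n, 0 ≤ x n) (hδ : Tendsto δ atTop (𝓝 0))
    (hrec : ∀ n, x (n + 1) ≤ q * x n + δ n) : Tendsto x atTop (𝓝 0) := by
  refine tendsto_order.2 ⟨fun a ha => Eventually.of_forall fun n => ha.trans_le (hx n),
    fun ε hε => ?_⟩
  obtain ⟨N, hN⟩ := eventually_atTop.1
    (hδ.eventually (ge_mem_nhds (by nlinarith : (0 : ℝ) < (1 - q) * (ε / 2))))
  have hgeom : ∀ m, x (N + m) - ε / 2 ≤ q ^ m * (x N - ε / 2) := by
    intro m
    induction m with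
    | zero => simp
    | succ m ih =>
      rw [← add_assoc]
      calc x (N + m + 1) - ε / 2 ≤ q * (x (N + m) - ε / 2) := by
            nlinarith [hrec (N + m), hN (N + m) (Nat.le_add_right N m)]
        _ ≤ q * (q ^ m * (x N - ε / 2)) := by gcongr
        _ = q ^ (m + 1) * (x N - ε / 2) := by ring
  have hpow : ∀ᶠ m in atTop, q ^ m * (x N - ε / 2) < ε / 2 :=
    ((tendsto_pow_atTop_nhds_zero_of_lt_one hq0 hq1).mul_const _).eventually
      (gt_mem_nhds (by rw [zero_mul]; positivity))
  obtain ⟨m₀, hm₀⟩ := eventually_atTop.1 hpow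
  refine eventually_atTop.2 ⟨N + m₀, fun n hn => ?_⟩
  obtain ⟨m, rfl⟩ := Nat.exists_eq_add_of_le (le_of_add_le_left hn)
  linarith [hgeom m, hm₀ m (by omega)]

theorem tendsto_zero_of_le_on_windows {f δ : ℝ → ℝ} {t₀ T q K : ℝ} (hT : 0 < T)
    (hq0 : 0 ≤ q) (hq1 : q < 1) (hf : ∀ t ≥ t₀, 0 ≤ f t) (hδ : Tendsto δ atTop (𝓝 0))
    (hstep : ∀ t ≥ t₀, f (t + T) ≤ q * f t + δ t)
    (hwin : ∀ t ≥ t₀, ∀ s ∈ Icc t (t + T), f s ≤ K * f t + δ t) :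
    Tendsto f atTop (𝓝 0) := by
  set u : ℕ → ℝ := fun n => t₀ + n * T
  have hu : ∀ n, t₀ ≤ u n := fun n => le_add_of_nonneg_right (by positivity)
  have hu_tendsto : Tendsto u atTop atTop :=
    tendsto_atTop_add_const_left _ _ (tendsto_natCast_atTop_atTop.atTop_mul_const hT)
  have hfu : Tendsto (f ∘ u) atTop (𝓝 0) :=
    tendsto_zero_of_le_mul_add hq0 hq1 (fun n => hf _ (hu n)) (hδ.comp hu_tendsto) fun n => by
      simpa [u, add_mul, add_assoc] using hstep (u n) (hu n)
  have hbound : Tendsto (fun n => K * f (u n) + δ (u n)) atTop (𝓝 0) := by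
    simpa using (hfu.const_mul K).add (hδ.comp hu_tendsto)
  set N : ℝ → ℕ := fun s => ⌊(s - t₀) / T⌋₊
  have hN : Tendsto N atTop atTop :=
    tendsto_nat_floor_atTop.comp
      ((tendsto_atTop_add_const_right _ (-t₀) tendsto_id).atTop_div_const hT)
  refine squeeze_zero' ((eventually_ge_atTop t₀).mono hf) ?_ (hbound.comp hN)
  filter_upwards [eventually_ge_atTop t₀] with s hs
  have hfloor := Nat.floor_le (div_nonneg (sub_nonneg.2 hs) hT.le)
  have hceil := Nat.lt_floor_add_one ((s - t₀) / T)
  rw [le_div_iff₀ hT] at hfloor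
  rw [div_lt_iff₀ hT] at hceil
  exact hwin (u (N s)) (hu _) s ⟨by simp only [u, N]; linarith, by simp only [u, N]; linarith⟩

theorem Real.isBoundedUnder_ge_of_liminf_ne_zero {ι : Type*} {u : ι → ℝ} {l : Filter ι}
    (h : liminf u l ≠ 0) : IsBoundedUnder (· ≥ ·) l u := by
  by_contra hb
  exact h (Real.liminf_of_not_isBoundedUnder hb)

theorem MeasureTheory.LocallyIntegrableOn.intervalIntegrable {E : Type*} [NormedAddCommGroup E]
    {f : ℝ → E} {μ : Measure ℝ} [IsLocallyFiniteMeasure μ] {s : Set ℝ} {a b : ℝ}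
    (hf : LocallyIntegrableOn f s μ) (hs : uIcc a b ⊆ s) : IntervalIntegrable f μ a b :=
  (hf.integrableOn_compact_subset hs isCompact_uIcc).intervalIntegrable

theorem uIcc_subset_Ioi_zero {a b : ℝ} (ha : 0 < a) (hab : a ≤ b) : uIcc a b ⊆ Ioi 0 := by
  rw [uIcc_of_le hab]
  exact fun x hx => ha.trans_le hx.1

theorem le_exp_neg_integral_mul_add_of_Ioi {ξ d α β : ℝ → ℝ}
    (hα : LocallyIntegrableOn α (Ioi 0)) (hβ : LocallyIntegrableOn β (Ioi 0))
    (hd : LocallyIntegrableOn d (Ioi 0))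
    (hAC : ∀ a ∈ Ioi (0 : ℝ), ∀ b, a ≤ b → ξ b - ξ a = ∫ t in a..b, d t)
    (hineq : ∀ᵐ t ∂(volume.restrict (Ioi (0 : ℝ))), d t + α t * ξ t ≤ β t)
    {a b : ℝ} (ha : 0 < a) (hab : a ≤ b) :
    ξ b ≤ Real.exp (-∫ t in a..b, α t) * ξ a
      + Real.exp (∫ t in a..b, max (-α t) 0) * ∫ t in a..b, max (β t) 0 := by
  have hsub := uIcc_subset_Ioi_zero ha hab
  refine le_exp_neg_integral_mul_add hab (fun x hx => ?_) (hd.intervalIntegrable hsub)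
    (hα.intervalIntegrable hsub) (hβ.intervalIntegrable hsub) ?_
  · linarith [hAC a ha x hx.1]
  · filter_upwards [(ae_restrict_iff' measurableSet_Ioi).1 hineq] with x hx hmem
    exact hx (ha.trans_le hmem.1)

theorem le_exp_integral_negPart_mul_add_of_Ioi {ξ d α β : ℝ → ℝ}
    (hα : LocallyIntegrableOn α (Ioi 0)) (hβ : LocallyIntegrableOn β (Ioi 0))
    (hd : LocallyIntegrableOn d (Ioi 0))
    (hAC : ∀ a ∈ Ioi (0 : ℝ), ∀ b, a ≤ b → ξ b - ξ a = ∫ t in a..b, d t)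
    (hineq : ∀ᵐ t ∂(volume.restrict (Ioi (0 : ℝ))), d t + α t * ξ t ≤ β t)
    {a s b : ℝ} (ha : 0 < a) (has : a ≤ s) (hsb : s ≤ b) (hξa : 0 ≤ ξ a) :
    ξ s ≤ Real.exp (∫ t in a..b, max (-α t) 0) * (ξ a + ∫ t in a..b, max (β t) 0) := by
  have hαI := hα.intervalIntegrable (uIcc_subset_Ioi_zero ha (has.trans hsb))
  have hβI := (hβ.intervalIntegrable (uIcc_subset_Ioi_zero ha (has.trans hsb))).pos_part
  calc ξ s ≤ Real.exp (-∫ t in a..s, α t) * ξ a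
        + Real.exp (∫ t in a..s, max (-α t) 0) * ∫ t in a..s, max (β t) 0 :=
      le_exp_neg_integral_mul_add_of_Ioi hα hβ hd hAC hineq ha has
    _ ≤ Real.exp (∫ t in a..b, max (-α t) 0) * ξ a
        + Real.exp (∫ t in a..b, max (-α t) 0) * ∫ t in a..b, max (β t) 0 := by
      gcongr
      · exact neg_integral_le_integral_negPart le_rfl has hsb hαI
      · exact intervalIntegral.integral_nonneg has fun _ _ => le_max_right _ _
      · exact intervalIntegral.integral_mono_interval le_rfl has hsb
          (Eventually.of_forall fun _ => le_max_right _ _) hαI.neg.pos_part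
      · exact intervalIntegral.integral_mono_interval le_rfl has hsb
          (Eventually.of_forall fun _ => le_max_right _ _) hβI
    _ = _ := by ring

/-- Modified Gronwall inequality of Jones–Titi.  Absolute continuity of `ξ` on `(0,∞)`
is expressed through the fundamental theorem of calculus: `ξ b - ξ a = ∫_a^b d`,
where `d` is a locally integrable a.e. derivative. -/
theorem stmt_7 (α β ξ d : ℝ → ℝ) (T : ℝ) (hT : 0 < T)
    (hα : LocallyIntegrableOn α (Set.Ioi 0))
    (hβ : LocallyIntegrableOn β (Set.Ioi 0))
    (hd : LocallyIntegrableOn d (Set.Ioi 0))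
    (hliminf : 0 < liminf (fun t => (1 / T) * ∫ τ in t..t + T, α τ) atTop)
    (hlimsupfin : IsBoundedUnder (· ≤ ·) atTop
      (fun t => (1 / T) * ∫ τ in t..t + T, max (-α τ) 0))
    (hβplus : Tendsto (fun t => (1 / T) * ∫ τ in t..t + T, max (β τ) 0) atTop (nhds 0))
    (hξnonneg : ∀ t ∈ Set.Ioi (0 : ℝ), 0 ≤ ξ t)
    (hAC : ∀ a ∈ Set.Ioi (0 : ℝ), ∀ b, a ≤ b → ξ b - ξ a = ∫ t in a..b, d t)
    (hineq : ∀ᵐ t ∂(volume.restrict (Set.Ioi (0 : ℝ))), d t + α t * ξ t ≤ β t) :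
    Tendsto ξ atTop (nhds 0) := by
  obtain ⟨γ, hγpos, hγ⟩ : ∃ γ > 0, ∀ᶠ t in atTop, γ < (1 / T) * ∫ τ in t..t + T, α τ :=
    ⟨_, half_pos hliminf, eventually_lt_of_lt_liminf (half_lt_self hliminf)
      (Real.isBoundedUnder_ge_of_liminf_ne_zero hliminf.ne')⟩
  obtain ⟨M, hM⟩ := hlimsupfin
  obtain ⟨t₀, ht₀⟩ := eventually_atTop.1 <|
    (hγ.and (eventually_map.1 hM)).and (eventually_gt_atTop 0)
  have hε : Tendsto (fun t => Real.exp (M * T) * ∫ τ in t..t + T, max (β τ) 0) atTop (𝓝 0) := by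
    simpa [hT.ne'] using (hβplus.const_mul T).const_mul (Real.exp (M * T))
  refine tendsto_zero_of_le_on_windows hT (q := Real.exp (-(γ * T))) (K := Real.exp (M * T))
    (Real.exp_pos _).le (Real.exp_lt_one_iff.2 (neg_neg_of_pos (mul_pos hγpos hT)))
    (fun t ht => hξnonneg t (ht₀ t ht).2) hε (fun t ht => ?_) (fun t ht s hs => ?_)
  all_goals
    obtain ⟨⟨hγt, hMt⟩, ht⟩ := ht₀ t ht
    rw [one_div_mul_eq_div, lt_div_iff₀ hT] at hγt
    rw [one_div_mul_eq_div, div_le_iff₀ hT] at hMt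
    have hξt := hξnonneg t ht
    have hβt : 0 ≤ ∫ τ in t..t + T, max (β τ) 0 :=
      intervalIntegral.integral_nonneg (le_add_of_nonneg_right hT.le) fun _ _ => le_max_right _ _
  · refine (le_exp_neg_integral_mul_add_of_Ioi hα hβ hd hAC hineq ht
      (le_add_of_nonneg_right hT.le)).trans ?_
    gcongr
  · refine (le_exp_integral_negPart_mul_add_of_Ioi hα hβ hd hAC hineq ht hs.1 hs.2 hξt).trans ?_
    rw [mul_add]
    gcongr
end

section
/- Let β ≥ 0 be a constant, ν, κ₀ > 0, and let y : ℝ → [0,∞) be an absolutely continuous bounded function satisfying y'(s) + α(s)y(s) ≤ β for all s ∈ ℝ, where α is locally integrable and ∫_{s-1/(νκ₀²)}^{s} α(σ)dσ ≥ 1 for all s ∈ ℝ. Then for all s ∈ ℝ: y(s) ≤ (2β/(νκ₀²)) · sup_{0≤r≤1} exp(-∫_{s-r/(νκ₀²)}^{s} α(σ)dσ). -/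
/-!
Multiplying by the integrating factor `exp (-∫_t^s α)` gives
`y s ≤ y (s - N L) exp (-∫_{s-NL}^s α) + β ∫_{s-NL}^s exp (-∫_t^s α) dt`.
Each window of length `L` carries at least unit mass of `α`, so the first term is at most
`C e^{-N}`, and on the `k`-th window back the integrand is at most `e^{-k} M`, where `M` is its
supremum on the first window; summing, the integral is at most `L M ∑ e^{-k} ≤ 2 L M`.
Letting `N → ∞` gives `y s ≤ 2 β L M`, with `L = 1/(νκ₀²)`.

Since `α` is only locally integrable, the integrating factor need not be differentiable, so the
inequality is first proved with `α` replaced by a continuous `g` that is `δ`-close in `L¹`, at the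
cost of a factor `e^δ` and an additive `C K δ` (`C`, `K` bounds for `|y|` and the integrating
factor), and then `δ → 0`.
-/

open MeasureTheory Filter Real Set Topology

theorem add_mul_le_add_abs_sub_mul {d y α g β C : ℝ} (h : d + α * y ≤ β) (hy : |y| ≤ C) :
    d + g * y ≤ β + |g - α| * C :=
  calc d + g * y = (d + α * y) + (g - α) * y := by ring
    _ ≤ β + |g - α| * |y| := add_le_add h ((le_abs_self _).trans (abs_mul _ _).le)
    _ ≤ β + |g - α| * C := by gcongr

section VariationOfConstants

variable {y d α : ℝ → ℝ} {a b β : ℝ}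

theorem continuousOn_exp_neg_integral (hab : a ≤ b) (hα : IntegrableOn α (Icc a b)) :
    ContinuousOn (fun t => exp (-∫ σ in t..b, α σ)) (Icc a b) := by
  rw [← uIcc_of_le hab] at hα ⊢
  exact (intervalIntegral.continuousOn_primitive_interval_left hα).neg.rexp

theorem le_mul_exp_neg_integral_add_integral_of_continuous {g φ : ℝ → ℝ}
    (hab : a ≤ b) (hy : ContinuousOn y (Icc a b)) (hd : ∀ t ∈ Ioo a b, HasDerivAt y (d t) t)
    (hg : Continuous g) (hφ : IntegrableOn φ (Icc a b))
    (hle : ∀ t ∈ Ioo a b, (d t + g t * y t) * exp (-∫ σ in t..b, g σ) ≤ φ t) :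
    y b ≤ y a * exp (-∫ σ in a..b, g σ) + ∫ t in a..b, φ t := by
  set w : ℝ → ℝ := fun t => exp (-∫ σ in t..b, g σ)
  have hw : ∀ t, HasDerivAt w (w t * g t) t := fun t => by
    simpa using (intervalIntegral.integral_hasDerivAt_left (hg.intervalIntegrable t b)
      (hg.stronglyMeasurableAtFilter _ _) hg.continuousAt).neg.exp
  have hw_cont : Continuous w := continuous_iff_continuousAt.2 fun t => (hw t).continuousAt
  have hFTC := intervalIntegral.sub_le_integral_of_hasDeriv_right_of_le hab
    (hy.mul hw_cont.continuousOn) (fun t ht => ((hd t ht).mul (hw t)).hasDerivWithinAt) hφ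
    fun t ht => by
      calc d t * w t + y t * (w t * g t) = (d t + g t * y t) * w t := by ring
        _ ≤ φ t := hle t ht
  have hwb : w b = 1 := by simp [w]
  simp only [Pi.mul_apply, hwb, mul_one] at hFTC
  linarith

theorem exists_continuous_intervalIntegral_abs_sub_le {δ : ℝ} (hab : a ≤ b)
    (hα : IntegrableOn α (Icc a b)) (hδ : 0 < δ) :
    ∃ g : ℝ → ℝ, Continuous g ∧ ∫ t in a..b, |g t - α t| ≤ δ := by
  have hαi := (integrable_indicator_iff measurableSet_Icc).2 hα
  obtain ⟨g, -, hgδ, hg, hgi⟩ := hαi.exists_hasCompactSupport_integral_sub_le hδ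
  refine ⟨g, hg, ?_⟩
  calc ∫ t in a..b, |g t - α t|
      = ∫ t in Ioc a b, ‖(Icc a b).indicator α t - g t‖ := by
        rw [intervalIntegral.integral_of_le hab]
        refine setIntegral_congr_fun measurableSet_Ioc fun t ht => ?_
        rw [indicator_of_mem (Ioc_subset_Icc_self ht), Real.norm_eq_abs, abs_sub_comm]
    _ ≤ ∫ t, ‖(Icc a b).indicator α t - g t‖ :=
        setIntegral_le_integral (hαi.sub hgi).norm (ae_of_all _ fun _ => norm_nonneg _)
    _ ≤ δ := hgδ

theorem exp_neg_integral_le_exp_mul_exp_neg_integral {g : ℝ → ℝ} {δ t : ℝ}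
    (hα : IntegrableOn α (Icc a b)) (hg : IntegrableOn g (Icc a b))
    (hgα : ∫ σ in a..b, |g σ - α σ| ≤ δ) (ht : t ∈ Icc a b) :
    exp (-∫ σ in t..b, g σ) ≤ exp δ * exp (-∫ σ in t..b, α σ) := by
  have hsub : Icc t b ⊆ Icc a b := Icc_subset_Icc_left ht.1
  have hαt := (intervalIntegrable_iff_integrableOn_Icc_of_le ht.2).2 (hα.mono_set hsub)
  have hgt := (intervalIntegrable_iff_integrableOn_Icc_of_le ht.2).2 (hg.mono_set hsub)
  have hgαi : IntervalIntegrable (fun σ => |g σ - α σ|) volume a b :=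
    (intervalIntegrable_iff_integrableOn_Icc_of_le (ht.1.trans ht.2)).2 (hg.sub hα).abs
  have hdiff : |(∫ σ in t..b, g σ) - ∫ σ in t..b, α σ| ≤ δ :=
    calc |(∫ σ in t..b, g σ) - ∫ σ in t..b, α σ| = |∫ σ in t..b, (g σ - α σ)| := by
          rw [intervalIntegral.integral_sub hgt hαt]
      _ ≤ ∫ σ in t..b, |g σ - α σ| := intervalIntegral.abs_integral_le_integral_abs ht.2
      _ ≤ ∫ σ in a..b, |g σ - α σ| :=
          intervalIntegral.integral_mono_interval ht.1 ht.2 le_rfl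
            (ae_of_all _ fun _ => abs_nonneg _) hgαi
      _ ≤ δ := hgα
  rw [← exp_add]
  exact exp_le_exp.2 (by linarith [(abs_le.1 hdiff).1])

theorem le_exp_mul_of_hasDerivAt_add_mul_le_of_integral_abs_sub_le {g : ℝ → ℝ} {C K δ : ℝ}
    (hab : a ≤ b) (hy : ContinuousOn y (Icc a b)) (hd : ∀ t ∈ Ioo a b, HasDerivAt y (d t) t)
    (hα : IntegrableOn α (Icc a b)) (hβ : 0 ≤ β) (hya : 0 ≤ y a)
    (hineq : ∀ t ∈ Ioo a b, d t + α t * y t ≤ β)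
    (hC : ∀ t ∈ Icc a b, |y t| ≤ C) (hK : ∀ t ∈ Icc a b, exp (-∫ σ in t..b, α σ) ≤ K)
    (hg : Continuous g) (hgα : ∫ t in a..b, |g t - α t| ≤ δ) :
    y b ≤ exp δ * (y a * exp (-∫ σ in a..b, α σ) +
      β * (∫ t in a..b, exp (-∫ σ in t..b, α σ)) + C * K * δ) := by
  set E : ℝ → ℝ := fun t => exp (-∫ σ in t..b, α σ)
  have ha : a ∈ Icc a b := left_mem_Icc.2 hab
  have hC0 : 0 ≤ C := (abs_nonneg _).trans (hC a ha)
  have hK0 : 0 ≤ K := (exp_pos _).le.trans (hK a ha)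
  have hw : ∀ t ∈ Icc a b, exp (-∫ σ in t..b, g σ) ≤ exp δ * E t := fun t ht =>
    exp_neg_integral_le_exp_mul_exp_neg_integral hα hg.integrableOn_Icc hgα ht
  have hEi : IntervalIntegrable (fun t => β * (exp δ * E t)) volume a b :=
    (((continuousOn_exp_neg_integral hab hα).intervalIntegrable_of_Icc hab).const_mul _).const_mul _
  have hgαCi : IntervalIntegrable (fun t => |g t - α t| * (C * (exp δ * K))) volume a b :=
    (((intervalIntegrable_iff_integrableOn_Icc_of_le hab).2
      (hg.integrableOn_Icc.sub hα)).abs).mul_const _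
  have hpert := le_mul_exp_neg_integral_add_integral_of_continuous hab hy hd hg
    ((intervalIntegrable_iff_integrableOn_Icc_of_le hab).1 (hEi.add hgαCi)) fun t ht => by
      have ht' := Ioo_subset_Icc_self ht
      calc (d t + g t * y t) * exp (-∫ σ in t..b, g σ)
          ≤ (β + |g t - α t| * C) * exp (-∫ σ in t..b, g σ) :=
            mul_le_mul_of_nonneg_right (add_mul_le_add_abs_sub_mul (hineq t ht) (hC t ht'))
              (exp_pos _).le
        _ = β * exp (-∫ σ in t..b, g σ) + |g t - α t| * (C * exp (-∫ σ in t..b, g σ)) := by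
            ring
        _ ≤ β * (exp δ * E t) + |g t - α t| * (C * (exp δ * K)) := by
            gcongr
            · exact hw t ht'
            · exact (hw t ht').trans (by gcongr; exact hK t ht')
  calc y b ≤ y a * exp (-∫ σ in a..b, g σ)
        + ∫ t in a..b, (β * (exp δ * E t) + |g t - α t| * (C * (exp δ * K))) := hpert
    _ ≤ y a * (exp δ * E a) + (β * (exp δ * ∫ t in a..b, E t)
        + (∫ t in a..b, |g t - α t|) * (C * (exp δ * K))) := by
      rw [intervalIntegral.integral_add hEi hgαCi, intervalIntegral.integral_const_mul,
        intervalIntegral.integral_const_mul, intervalIntegral.integral_mul_const]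
      gcongr
      exact hw a ha
    _ ≤ exp δ * (y a * E a + β * (∫ t in a..b, E t) + C * K * δ) := by
      have := mul_le_mul_of_nonneg_right hgα (by positivity : 0 ≤ C * (exp δ * K))
      linarith

theorem le_exp_neg_integral_add_of_hasDerivAt_add_mul_le
    (hab : a ≤ b) (hy : ContinuousOn y (Icc a b)) (hd : ∀ t ∈ Ioo a b, HasDerivAt y (d t) t)
    (hα : IntegrableOn α (Icc a b)) (hβ : 0 ≤ β) (hya : 0 ≤ y a)
    (hineq : ∀ t ∈ Ioo a b, d t + α t * y t ≤ β) :
    y b ≤ y a * exp (-∫ σ in a..b, α σ) + β * ∫ t in a..b, exp (-∫ σ in t..b, α σ) := by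
  set X := y a * exp (-∫ σ in a..b, α σ) + β * ∫ t in a..b, exp (-∫ σ in t..b, α σ)
  obtain ⟨C, hC⟩ := isCompact_Icc.exists_bound_of_continuousOn hy
  obtain ⟨K, hK⟩ := isCompact_Icc.bddAbove_image (continuousOn_exp_neg_integral hab hα)
  have hperturbed : ∀ δ > 0, y b ≤ exp δ * (X + C * K * δ) := fun δ hδ => by
    obtain ⟨g, hg, hgα⟩ := exists_continuous_intervalIntegral_abs_sub_le hab hα hδ
    exact le_exp_mul_of_hasDerivAt_add_mul_le_of_integral_abs_sub_le hab hy hd hα hβ hya hineq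
      hC (fun t ht => hK (mem_image_of_mem _ ht)) hg hgα
  have hlim : Tendsto (fun δ => exp δ * (X + C * K * δ)) (𝓝[>] 0) (𝓝 X) := by
    have hcont : Continuous fun δ => exp δ * (X + C * K * δ) := by fun_prop
    simpa using (hcont.tendsto 0).mono_left nhdsWithin_le_nhds
  exact ge_of_tendsto hlim (eventually_nhdsWithin_of_forall hperturbed)

end VariationOfConstants

theorem sum_range_exp_neg_le_two (N : ℕ) : ∑ k ∈ Finset.range N, exp (-k) ≤ 2 := by
  have hexp : exp (-1) ≤ 1 / 2 := by
    rw [exp_neg, one_div]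
    exact inv_anti₀ two_pos (by linarith [add_one_le_exp (1 : ℝ)])
  calc ∑ k ∈ Finset.range N, exp (-k) = ∑ k ∈ Finset.range N, exp (-1) ^ k := by
        simp_rw [← exp_nat_mul, mul_neg_one]
    _ ≤ ∑ k ∈ Finset.range N, (1 / 2 : ℝ) ^ k := by gcongr
    _ ≤ 2 := sum_geometric_two_le N

section Window

variable {α : ℝ → ℝ} {L : ℝ}

theorem MeasureTheory.LocallyIntegrable.intervalIntegrable (hα : LocallyIntegrable α) (a b : ℝ) :
    IntervalIntegrable α volume a b :=
  (hα.integrableOn_isCompact isCompact_uIcc).intervalIntegrable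

theorem natCast_le_integral_of_one_le_integral (hα : LocallyIntegrable α)
    (hwin : ∀ t, 1 ≤ ∫ σ in (t - L)..t, α σ) (k : ℕ) (t : ℝ) :
    (k : ℝ) ≤ ∫ σ in (t - k * L)..t, α σ := by
  induction k generalizing t with
  | zero => simp
  | succ k ih =>
    rw [← intervalIntegral.integral_add_adjacent_intervals (b := t - L)
      (hα.intervalIntegrable _ _) (hα.intervalIntegrable _ _)]
    have h := ih (t - L)
    push_cast
    rw [show t - L - k * L = t - (k + 1) * L by ring] at h
    linarith [hwin t]

theorem continuous_exp_neg_integral (hα : LocallyIntegrable α) (s : ℝ) :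
    Continuous fun t => exp (-∫ σ in t..s, α σ) := by
  simp_rw [intervalIntegral.integral_symm s, neg_neg]
  exact (intervalIntegral.continuous_primitive hα.intervalIntegrable s).rexp

theorem exp_neg_integral_le_iSup (hα : LocallyIntegrable α) (hL : 0 < L) {s t : ℝ}
    (ht : t ∈ Icc (s - L) s) :
    exp (-∫ σ in t..s, α σ) ≤ ⨆ r : Icc (0 : ℝ) 1, exp (-∫ σ in (s - r * L)..s, α σ) := by
  have hbdd : BddAbove (range fun r : Icc (0 : ℝ) 1 => exp (-∫ σ in (s - r * L)..s, α σ)) :=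
    (isCompact_range ((continuous_exp_neg_integral hα s).comp
      (continuous_const.sub (continuous_subtype_val.mul continuous_const)))).bddAbove
  have hr : (s - t) / L ∈ Icc (0 : ℝ) 1 := by
    constructor
    · exact div_nonneg (by linarith [ht.2]) hL.le
    · rw [div_le_one hL]; linarith [ht.1]
  calc exp (-∫ σ in t..s, α σ) = exp (-∫ σ in (s - (s - t) / L * L)..s, α σ) := by
        rw [div_mul_cancel₀ _ hL.ne', sub_sub_cancel]
    _ ≤ _ := le_ciSup hbdd ⟨_, hr⟩

theorem exp_neg_integral_le_exp_neg_mul_iSup (hα : LocallyIntegrable α) (hL : 0 < L)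
    (hwin : ∀ t, 1 ≤ ∫ σ in (t - L)..t, α σ) {s t : ℝ} (k : ℕ)
    (ht : t ∈ Icc (s - (k + 1) * L) (s - k * L)) :
    exp (-∫ σ in t..s, α σ) ≤
      exp (-k) * ⨆ r : Icc (0 : ℝ) 1, exp (-∫ σ in (s - r * L)..s, α σ) := by
  have hk := natCast_le_integral_of_one_le_integral hα hwin k (t + k * L)
  rw [add_sub_cancel_right] at hk
  rw [← intervalIntegral.integral_add_adjacent_intervals (b := t + k * L)
    (hα.intervalIntegrable _ _) (hα.intervalIntegrable _ _), neg_add, exp_add]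
  gcongr
  exact exp_neg_integral_le_iSup hα hL ⟨by linarith [ht.1], by linarith [ht.2]⟩

theorem integral_exp_neg_integral_le (hα : LocallyIntegrable α) (hL : 0 < L)
    (hwin : ∀ t, 1 ≤ ∫ σ in (t - L)..t, α σ) (s : ℝ) (N : ℕ) :
    ∫ t in (s - N * L)..s, exp (-∫ σ in t..s, α σ) ≤
      2 * L * ⨆ r : Icc (0 : ℝ) 1, exp (-∫ σ in (s - r * L)..s, α σ) := by
  set M := ⨆ r : Icc (0 : ℝ) 1, exp (-∫ σ in (s - r * L)..s, α σ)
  have hM : 0 ≤ M := (exp_pos _).le.trans (exp_neg_integral_le_iSup hα hL ⟨by linarith, le_rfl⟩)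
  have hcell : ∀ k : ℕ, ∫ t in (s - (k + 1 : ℕ) * L)..(s - k * L), exp (-∫ σ in t..s, α σ) ≤
      L * (exp (-k) * M) := fun k => by
    have h := intervalIntegral.integral_mono_on (a := s - (k + 1 : ℕ) * L) (b := s - k * L)
      (by push_cast; nlinarith) ((continuous_exp_neg_integral hα s).intervalIntegrable _ _)
      (intervalIntegrable_const (μ := volume) (c := exp (-k) * M))
      fun t ht => exp_neg_integral_le_exp_neg_mul_iSup hα hL hwin k (by push_cast at ht; exact ht)
    rwa [intervalIntegral.integral_const, smul_eq_mul,
      show s - k * L - (s - (k + 1 : ℕ) * L) = L by push_cast; ring] at h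
  have hsum : ∀ N : ℕ, ∫ t in (s - N * L)..s, exp (-∫ σ in t..s, α σ) ≤
      L * M * ∑ k ∈ Finset.range N, exp (-k) := by
    intro N
    induction N with
    | zero => simp
    | succ N ih =>
      rw [← intervalIntegral.integral_add_adjacent_intervals (b := s - N * L)
        ((continuous_exp_neg_integral hα s).intervalIntegrable _ _)
        ((continuous_exp_neg_integral hα s).intervalIntegrable _ _), Finset.sum_range_succ]
      linarith [hcell N]
  calc _ ≤ L * M * ∑ k ∈ Finset.range N, exp (-k) := hsum N
    _ ≤ L * M * 2 := by gcongr; exact sum_range_exp_neg_le_two N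
    _ = 2 * L * M := by ring

theorem le_two_mul_mul_iSup_exp_neg_integral {β : ℝ} {y d : ℝ → ℝ} (hL : 0 < L) (hβ : 0 ≤ β)
    (hα : LocallyIntegrable α) (hy_nonneg : ∀ s, 0 ≤ y s) (hy_bdd : ∃ C, ∀ s, y s ≤ C)
    (hy_deriv : ∀ s, HasDerivAt y (d s) s) (hy_ineq : ∀ s, d s + α s * y s ≤ β)
    (hwin : ∀ t, 1 ≤ ∫ σ in (t - L)..t, α σ) (s : ℝ) :
    y s ≤ 2 * β * L * ⨆ r : Icc (0 : ℝ) 1, exp (-∫ σ in (s - r * L)..s, α σ) := by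
  obtain ⟨C, hC⟩ := hy_bdd
  set M := ⨆ r : Icc (0 : ℝ) 1, exp (-∫ σ in (s - r * L)..s, α σ)
  have hN : ∀ N : ℕ, y s ≤ C * exp (-N) + 2 * β * L * M := fun N => by
    have hsN : s - N * L ≤ s := sub_le_self _ (by positivity)
    have hvar := le_exp_neg_integral_add_of_hasDerivAt_add_mul_le hsN
      (fun t _ => (hy_deriv t).continuousAt.continuousWithinAt) (fun t _ => hy_deriv t)
      (hα.integrableOn_isCompact isCompact_Icc) hβ (hy_nonneg _) (fun t _ => hy_ineq t)
    refine hvar.trans (add_le_add ?_ ?_)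
    · exact mul_le_mul (hC _) (exp_le_exp.2 (neg_le_neg
        (natCast_le_integral_of_one_le_integral hα hwin N s))) (exp_pos _).le
        ((hy_nonneg s).trans (hC s))
    · calc β * ∫ t in (s - N * L)..s, exp (-∫ σ in t..s, α σ) ≤ β * (2 * L * M) :=
            mul_le_mul_of_nonneg_left (integral_exp_neg_integral_le hα hL hwin s N) hβ
        _ = 2 * β * L * M := by ring
  have hlim : Tendsto (fun N : ℕ => C * exp (-N) + 2 * β * L * M) atTop (𝓝 (2 * β * L * M)) := by
    simpa using ((tendsto_exp_neg_atTop_nhds_zero.comp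
      tendsto_natCast_atTop_atTop).const_mul C).add_const (2 * β * L * M)
  exact ge_of_tendsto' hlim hN

end Window

/-- Backward Gronwall-type bound (Lemma 5.2 of the paper): if `y ≥ 0` is bounded,
differentiable with `y' + α y ≤ β` on all of `ℝ`, and `∫_{s-1/(νκ₀²)}^s α ≥ 1`
for all `s`, then
`y(s) ≤ (2β/(νκ₀²)) · sup_{0≤r≤1} exp(-∫_{s-r/(νκ₀²)}^s α)`. -/
theorem stmt_8 (β ν κ₀ : ℝ) (hβ : 0 ≤ β) (hν : 0 < ν) (hκ : 0 < κ₀)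
    (y d α : ℝ → ℝ)
    (hα : LocallyIntegrable α)
    (hy_nonneg : ∀ s, 0 ≤ y s)
    (hy_bdd : ∃ C, ∀ s, y s ≤ C)
    (hy_deriv : ∀ s, HasDerivAt y (d s) s)
    (hy_ineq : ∀ s, d s + α s * y s ≤ β)
    (hα_int : ∀ s : ℝ, 1 ≤ ∫ σ in (s - 1 / (ν * κ₀ ^ 2))..s, α σ) :
    ∀ s : ℝ, y s ≤ (2 * β / (ν * κ₀ ^ 2)) *
      ⨆ r : Set.Icc (0 : ℝ) 1,
        Real.exp (-∫ σ in (s - (r : ℝ) / (ν * κ₀ ^ 2))..s, α σ) := by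
  intro s
  simpa only [mul_one_div] using le_two_mul_mul_iSup_exp_neg_integral
    (one_div_pos.2 (by positivity)) hβ hα hy_nonneg hy_bdd hy_deriv hy_ineq hα_int s
end
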